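/- Let β₀ ∈ R^p with A₀ = supp(β₀), and let β̌ ∈ R^p satisfy (i) β̌_j = 0 for all j ∉ A₀ and (ii) η := sup_{j∈A₀} |β̌_j − β₀_j|/|β₀_j| < 1. Let M₁ > 0 and r > 0, and assume inf_{j∈A₀}|β₀_j| > M₁/(r(1 − η)). Then for every u ∈ R^p and every δ ∈ R^p with ‖δ‖_∞ ≤ M₁, V(δ; β̌, u) = V(δ; β₀, u). -/

import Mathlib

/-!
Only the penalty part of `V` depends on `b`, coordinatewise through `|b_j + t| - |b_j|` with
`t = δ_j / r`, and this increment equals `sign b_j * t` as soon as `|t| ≤ |b_j|`. Off `A₀` both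
`β̌_j` and `β₀_j` vanish. On `A₀` the relative error `η < 1` forces `β̌_j` to have the sign of
`β₀_j` and modulus at least `(1 - η)|β₀_j|`, which the beta-min condition makes larger than
`M₁ / r ≥ |δ_j / r|`; hence both increments equal `sign β₀_j * δ_j / r`.
-/

open Matrix

/-- The localized Lasso criterion
`V(δ; b, u) = (n/(2r²)) δᵀCδ − (n/r) δᵀu + nλ Σ_j w_j(|b_j + δ_j/r| − |b_j|)`,
where `C = XᵀX/n`. -/
noncomputable def Vfun {n p : ℕ} (X : Matrix (Fin n) (Fin p) ℝ) (w : Fin p → ℝ)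
    (lam r : ℝ) (b u δ : Fin p → ℝ) : ℝ :=
  (n / (2 * r ^ 2)) * dotProduct δ (((n : ℝ)⁻¹ • (Xᵀ * X)).mulVec δ)
    - (n / r) * dotProduct δ u
    + n * lam * ∑ j, w j * (|b j + δ j / r| - |b j|)

theorem abs_add_sub_abs_of_abs_le {b t : ℝ} (h : |t| ≤ |b|) :
    |b + t| - |b| = Real.sign b * t := by
  rcases lt_trichotomy b 0 with hb | rfl | hb
  · have ht := abs_le.mp (abs_of_neg hb ▸ h)
    rw [Real.sign_of_neg hb, abs_of_neg hb, abs_of_nonpos (by linarith)]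
    ring
  · rw [abs_zero, abs_nonpos_iff] at h
    simp [h]
  · have ht := abs_le.mp (abs_of_pos hb ▸ h)
    rw [Real.sign_of_pos hb, abs_of_pos hb, abs_of_nonneg (by linarith)]
    ring

theorem Real.sign_eq_of_abs_sub_lt {b c : ℝ} (h : |c - b| < |b|) : Real.sign c = Real.sign b := by
  have h' := abs_lt.mp h
  rcases lt_trichotomy b 0 with hb | rfl | hb
  · rw [abs_of_neg hb] at h'
    rw [Real.sign_of_neg hb, Real.sign_of_neg (by linarith)]
  · rw [abs_zero] at h
    exact absurd h (abs_nonneg _).not_gt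
  · rw [abs_of_pos hb] at h'
    rw [Real.sign_of_pos hb, Real.sign_of_pos (by linarith)]

theorem abs_add_sub_abs_eq_of_abs_sub_le_mul {b c t η : ℝ} (hη : η < 1)
    (hcb : |c - b| ≤ η * |b|) (ht : |t| < (1 - η) * |b|) :
    |c + t| - |c| = |b + t| - |b| := by
  have hb : 0 < |b| := pos_of_mul_pos_right ((abs_nonneg t).trans_lt ht) (by linarith)
  have hηb : 0 ≤ η * |b| := (abs_nonneg _).trans hcb
  have hc : (1 - η) * |b| ≤ |c| := by
    linarith [abs_sub_abs_le_abs_sub b c, abs_sub_comm c b]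
  have htc : |t| ≤ |c| := by linarith
  have htb : |t| ≤ |b| := by linarith
  have hcb' : |c - b| < |b| := by nlinarith
  rw [abs_add_sub_abs_of_abs_le htc, abs_add_sub_abs_of_abs_le htb,
    Real.sign_eq_of_abs_sub_lt hcb']

theorem Vfun_eq_of_penalty_eq {n p : ℕ} (X : Matrix (Fin n) (Fin p) ℝ) (w : Fin p → ℝ)
    (lam r : ℝ) {b b' : Fin p → ℝ} (u δ : Fin p → ℝ)
    (h : ∀ j, |b j + δ j / r| - |b j| = |b' j + δ j / r| - |b' j|) :
    Vfun X w lam r b u δ = Vfun X w lam r b' u δ := by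
  simp only [Vfun, h]

theorem V_eq_of_thresholded_general {n p : ℕ}
    (X : Matrix (Fin n) (Fin p) ℝ) (w : Fin p → ℝ)
    (lam : ℝ) (r : ℝ) (hr : 0 < r)
    (β₀ βc : Fin p → ℝ)
    (hsupp : ∀ j, β₀ j = 0 → βc j = 0)
    (η : ℝ) (hη1 : η < 1)
    (hη : ∀ j, β₀ j ≠ 0 → |βc j - β₀ j| ≤ η * |β₀ j|)
    (M₁ : ℝ)
    (hbetamin : ∀ j, β₀ j ≠ 0 → M₁ / (r * (1 - η)) < |β₀ j|) :
    ∀ (u δ : Fin p → ℝ), (∀ j, |δ j| ≤ M₁) →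
      Vfun X w lam r βc u δ = Vfun X w lam r β₀ u δ := by
  intro u δ hδ
  refine Vfun_eq_of_penalty_eq X w lam r u δ fun j => ?_
  by_cases h0 : β₀ j = 0
  · rw [h0, hsupp j h0]
  · refine abs_add_sub_abs_eq_of_abs_sub_le_mul hη1 (hη j h0) ?_
    calc |δ j / r| = |δ j| / r := by rw [abs_div, abs_of_pos hr]
      _ ≤ M₁ / r := div_le_div_of_nonneg_right (hδ j) hr.le
      _ < (1 - η) * |β₀ j| := by
        have h := hbetamin j h0
        rwa [← div_div, div_lt_iff₀ (by linarith), mul_comm] at h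

/-- If `β̌` vanishes off `A₀ = supp(β₀)`, agrees with `β₀` up to relative error `η < 1`
on `A₀`, and the beta-min condition `inf_{A₀}|β₀_j| > M₁/(r(1 − η))` holds, then
`V(δ; β̌, u) = V(δ; β₀, u)` for all `u` and all `δ` with `‖δ‖_∞ ≤ M₁`. -/
theorem V_eq_of_thresholded {n p : ℕ}
    (X : Matrix (Fin n) (Fin p) ℝ) (w : Fin p → ℝ) (hw : ∀ j, 0 < w j)
    (lam : ℝ) (hlam : 0 < lam) (r : ℝ) (hr : 0 < r)
    (β₀ βc : Fin p → ℝ)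
    (hsupp : ∀ j, β₀ j = 0 → βc j = 0)
    (η : ℝ) (hη0 : 0 ≤ η) (hη1 : η < 1)
    (hη : ∀ j, β₀ j ≠ 0 → |βc j - β₀ j| ≤ η * |β₀ j|)
    (M₁ : ℝ) (hM₁ : 0 < M₁)
    (hbetamin : ∀ j, β₀ j ≠ 0 → M₁ / (r * (1 - η)) < |β₀ j|) :
    ∀ (u δ : Fin p → ℝ), (∀ j, |δ j| ≤ M₁) →
      Vfun X w lam r βc u δ = Vfun X w lam r β₀ u δ :=
  V_eq_of_thresholded_general X w lam r hr β₀ βc hsupp η hη1 hη M₁ hbetamin
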